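/- arXiv:2508.16813 — 2 statements merged into one kernel-verified Lean document; each statement's English description precedes it below -/
import Mathlib

section
/- For any real y > 0 and even integer k ≥ 4, one has the identity (Γ(k)/(4π y)^k) · Σ_{n ∈ ℤ} (1 + in/(2y))^{-k} = Σ_{m=1}^{∞} m^{k-1} e^{-4π m y}. -/
/-!
With `z = 2 i y` in the upper half-plane, `1 + i n / (2y) = (z - n) / z`, so after `n ↦ -n` the
left-hand sum is `z ^ k * ∑ₙ (z + n) ^ (-k)`. The Lipschitz summation formula (Mathlib's
`EisensteinSeries.qExpansion_identity`, proved there from the partial fractions of the cotangent)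
turns this into `(-2πi) ^ k / (k - 1)! * ∑_{m ≥ 1} m ^ (k - 1) q ^ m` with `q = e^{2πiz} = e^{-4πy}`,
and the constants cancel because `z * (-2πi) = 4πy` and `Γ(k) = (k - 1)!`.
-/

open Real Complex

open scoped Nat

lemma tsum_one_div_ofReal_mul_I_add_int_pow {t : ℝ} (ht : 0 < t) {k : ℕ} (hk : 1 ≤ k) :
    ∑' n : ℤ, 1 / ((t : ℂ) * I + n) ^ (k + 1) =
      (-2 * π * I) ^ (k + 1) / k ! *
        ∑' m : ℕ, ((m : ℂ) + 1) ^ k * cexp (-(2 * π * (m + 1) * t)) := by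
  have h := EisensteinSeries.qExpansion_identity_pnat hk ⟨t * I, by simpa using ht⟩
  rw [tsum_pnat_eq_tsum_succ (f := fun n ↦ (n : ℂ) ^ k * cexp (2 * π * I * (t * I)) ^ n)] at h
  convert h using 4 with m
  rw [← Complex.exp_nat_mul]
  push_cast
  ring_nf
  simp only [I_sq]
  ring_nf

lemma one_add_I_mul_div_zpow_neg {a : ℝ} (ha : a ≠ 0) (w : ℂ) (k : ℕ) :
    (1 + I * w / a) ^ (-(k : ℤ)) = (a * I) ^ k * (1 / (a * I + -w) ^ k) := by
  have ha' : (a : ℂ) ≠ 0 := ofReal_ne_zero.mpr ha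
  have h : 1 + I * w / a = (a * I + -w) / (a * I) := by
    field_simp
    ring_nf
    simp only [I_sq]
    ring
  rw [h, zpow_neg, zpow_natCast, div_pow, inv_div, div_eq_mul_one_div]

lemma tsum_one_add_I_mul_div_zpow_neg {a : ℝ} (ha : a ≠ 0) (k : ℕ) :
    ∑' n : ℤ, (1 + I * n / a) ^ (-(k : ℤ)) = (a * I) ^ k * ∑' n : ℤ, 1 / (a * I + n) ^ k := by
  simp_rw [one_add_I_mul_div_zpow_neg ha, tsum_mul_left]
  congr 1
  simpa using (Equiv.neg ℤ).tsum_eq (fun n : ℤ ↦ 1 / ((a : ℂ) * I + n) ^ k)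

theorem poisson_summation_identity_general (y : ℝ) (hy : 0 < y) (k : ℕ) (hk : 4 ≤ k) :
    (Real.Gamma k : ℂ) / ((4 * π * y) ^ k) *
        ∑' n : ℤ, (1 + Complex.I * (n : ℂ) / (2 * y)) ^ (-(k : ℤ)) =
      ∑' m : ℕ, ((m : ℂ) + 1) ^ (k - 1) * Complex.exp (-(4 * π * ((m : ℂ) + 1) * y)) := by
  obtain ⟨j, rfl⟩ : ∃ j, k = j + 1 := ⟨k - 1, by omega⟩
  have h2y : (0 : ℝ) < 2 * y := by positivity
  have hsum := tsum_one_add_I_mul_div_zpow_neg h2y.ne' (j + 1)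
  rw [tsum_one_div_ofReal_mul_I_add_int_pow h2y (by omega)] at hsum
  push_cast at hsum ⊢
  rw [hsum, Real.Gamma_nat_eq_factorial, ofReal_natCast]
  simp_rw [show ∀ m : ℕ, -(2 * π * ((m : ℂ) + 1) * (2 * y)) = -(4 * π * (m + 1) * y) by
    intro; ring]
  set S := ∑' m : ℕ, ((m : ℂ) + 1) ^ j * cexp (-(4 * π * (m + 1) * y))
  have hI : (2 * y * I) * (-2 * π * I) = 4 * π * y := by ring_nf; simp [I_sq]
  have hfac : (j ! : ℂ) ≠ 0 := Nat.cast_ne_zero.mpr j.factorial_ne_zero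
  have h4πy : (4 * π * y : ℂ) ≠ 0 := by exact_mod_cast (by positivity : 4 * π * y ≠ 0)
  calc _ = (j ! : ℂ) / (4 * π * y) ^ (j + 1) *
        ((2 * y * I) ^ (j + 1) * (-2 * π * I) ^ (j + 1)) / j ! * S := by ring
    _ = (j ! : ℂ) / (4 * π * y) ^ (j + 1) * ((2 * y * I) * (-2 * π * I)) ^ (j + 1) / j ! * S := by
        rw [mul_pow (2 * (y : ℂ) * I)]
    _ = S := by rw [hI]; field_simp

theorem poisson_summation_identity (y : ℝ) (hy : 0 < y) (k : ℕ) (hk : 4 ≤ k) (hke : Even k) :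
    (Real.Gamma k : ℂ) / ((4 * π * y) ^ k) *
        ∑' n : ℤ, (1 + Complex.I * (n : ℂ) / (2 * y)) ^ (-(k : ℤ)) =
      ∑' m : ℕ, ((m : ℂ) + 1) ^ (k - 1) * Complex.exp (-(4 * π * ((m : ℂ) + 1) * y)) :=
  poisson_summation_identity_general y hy k hk
end

section
/- Let κ ≥ 1/2 be real, Y > 0, and 0 < Δ < 1. Then Σ over natural numbers m with |m - κ/Y| > Δ·κ/Y of m^κ e^{-Y m} is at most C·(1/Δ + κ)·(1/Y)·(κ/(eY))^κ·exp(-Δ²κ/4) for some absolute constant C > 0. -/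
/-!
With `x ^ κ * exp (-Y x) = exp (κ log x - Y x)`, the exponent is concave with maximum
`κ (log (κ / Y) - 1)` at `x = κ / Y`, so the peak value is `(κ / (e Y)) ^ κ`. The inequality
`log t ≤ (t - 1) - (t - 1)² / 4` on `(0, 2]`, applied to `t = x / (κ / Y)`, puts the exponent at
least `κ Δ² / 4` below its maximum for `x ≤ (1 - Δ) κ / Y` and at `x = (1 + Δ) κ / Y`. Below the
peak there are at most `κ / Y` terms; above it the tangent at `(1 + Δ) κ / Y` makes the terms
decay geometrically with ratio `exp (-Δ Y / (1 + Δ))`, and the geometric sum is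
`O (κ / Y + 1 / (Δ Y))`.
-/

open Real

theorem Real.log_le_log_add_sub_div {x u : ℝ} (hx : 0 < x) (hu : 0 < u) :
    log x ≤ log u + (x - u) / u := by
  have h := log_le_sub_one_of_pos (div_pos hx hu)
  rw [log_div hx.ne' hu.ne'] at h
  have : (x - u) / u = x / u - 1 := by field_simp
  linarith

theorem Real.log_le_sub_one_sub_sq_div_four {t : ℝ} (ht : 0 < t) (ht2 : t ≤ 2) :
    log t ≤ t - 1 - (t - 1) ^ 2 / 4 := by
  rcases le_total t 1 with ht1 | ht1
  · -- `log t ≤ 2 (√t - 1)`, and `(√t - 1)² ≥ (t - 1)² / 4` because `√t + 1 ≤ 2`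
    set r := √t with hr
    have hr0 : 0 < r := sqrt_pos.2 ht
    have hr1 : r ≤ 1 := sqrt_le_one.2 ht1
    have hrt : r ^ 2 = t := sq_sqrt ht.le
    have hlog : log t = 2 * log r := by rw [hr, log_sqrt ht.le]; ring
    have := log_le_sub_one_of_pos hr0
    rw [hlog, ← hrt]
    nlinarith [mul_nonneg (sq_nonneg (r - 1))
      (mul_nonneg (sub_nonneg.2 hr1) (by linarith : 0 ≤ 3 + r))]
  · -- `log t ≤ sinh (log t) = (t - t⁻¹) / 2`
    have h := self_le_sinh_iff.2 (log_nonneg ht1)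
    rw [sinh_eq, exp_log ht, exp_neg, exp_log ht] at h
    have key : (t - t⁻¹) / 2 ≤ t - 1 - (t - 1) ^ 2 / 4 := by
      rw [← sub_nonneg]
      have : t - 1 - (t - 1) ^ 2 / 4 - (t - t⁻¹) / 2 = (t - 1) ^ 2 * (2 - t) / (4 * t) := by
        field_simp; ring
      rw [this]; positivity
    linarith

theorem Real.inv_one_sub_exp_neg_le {a : ℝ} (ha : 0 < a) : (1 - exp (-a))⁻¹ ≤ 1 + a⁻¹ := by
  have h1 : 0 < exp a - 1 := by linarith [add_one_le_exp a, exp_pos a]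
  have : (1 - exp (-a))⁻¹ = 1 + (exp a - 1)⁻¹ := by
    rw [exp_neg]; field_simp; ring
  rw [this]
  gcongr
  linarith [add_one_le_exp a]

theorem Real.exp_neg_half_div_one_sub_exp_neg_le {a : ℝ} (ha : 0 < a) :
    exp (-(a / 2)) / (1 - exp (-a)) ≤ a⁻¹ := by
  have hs := self_lt_sinh_iff.2 (half_pos ha)
  have : exp (-(a / 2)) / (1 - exp (-a)) = (2 * sinh (a / 2))⁻¹ := by
    rw [sinh_eq, show -a = -(a / 2) * 2 by ring, exp_mul, exp_neg]
    set e := exp (a / 2)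
    have he : 1 < e := one_lt_exp_iff.2 (half_pos ha)
    have : 1 - (e⁻¹) ^ (2 : ℝ) = (e - e⁻¹) * e⁻¹ := by
      rw [rpow_two, sub_mul, mul_inv_cancel₀ (by positivity)]; ring
    rw [this]
    have : e - e⁻¹ ≠ 0 := by
      have := inv_lt_one_of_one_lt₀ he; linarith
    field_simp
  rw [this]
  exact inv_anti₀ ha (by linarith)

theorem hasSum_indicator_exp_neg_mul_sub {a s : ℝ} (ha : 0 < a) (hs : 0 ≤ s) :
    HasSum ({m : ℕ | s < m}.indicator fun m => exp (-(a * (m - s))))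
      (exp (-(a * (⌊s⌋₊ + 1 - s))) / (1 - exp (-a))) := by
  set M := ⌊s⌋₊ + 1
  have hr : exp (-a) < 1 := exp_lt_one_iff.2 (neg_lt_zero.2 ha)
  have hbefore : ∑ m ∈ Finset.range M, {m : ℕ | s < m}.indicator (fun m => exp (-(a * (m - s)))) m
      = 0 := by
    refine Finset.sum_eq_zero fun m hm => Set.indicator_of_notMem ?_ _
    simpa [Nat.lt_succ_iff, M, Nat.le_floor_iff hs] using hm
  have hafter : ∀ n : ℕ, {m : ℕ | s < m}.indicator (fun m => exp (-(a * (m - s)))) (n + M)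
      = exp (-(a * (⌊s⌋₊ + 1 - s))) * exp (-a) ^ n := by
    intro n
    have hmem : n + M ∈ {m : ℕ | s < m} := by
      show s < ((n + M : ℕ) : ℝ)
      push_cast [M]; linarith [Nat.lt_floor_add_one s, (n.cast_nonneg : (0 : ℝ) ≤ n)]
    rw [Set.indicator_of_mem hmem, ← exp_nat_mul, ← exp_add]
    push_cast [M]; ring_nf
  rw [← hasSum_nat_add_iff' M, hbefore, sub_zero, div_eq_mul_inv]
  simp_rw [hafter]
  exact (hasSum_geometric_of_lt_one (exp_pos _).le hr).mul_left _

theorem exp_neg_mul_floor_add_one_sub_div_le {a s : ℝ} (ha : 0 < a) (hs : 0 ≤ s) :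
    exp (-(a * (⌊s⌋₊ + 1 - s))) / (1 - exp (-a)) ≤ 2 * s + a⁻¹ := by
  have hr : 0 < 1 - exp (-a) := sub_pos.2 (exp_lt_one_iff.2 (neg_lt_zero.2 ha))
  rcases lt_or_ge s (1 / 2) with hs2 | hs2
  · have hfloor : ⌊s⌋₊ = 0 := Nat.floor_eq_zero.2 (by linarith)
    calc exp (-(a * (⌊s⌋₊ + 1 - s))) / (1 - exp (-a)) ≤ exp (-(a / 2)) / (1 - exp (-a)) := by
          gcongr
          rw [hfloor, Nat.cast_zero]; nlinarith
      _ ≤ a⁻¹ := exp_neg_half_div_one_sub_exp_neg_le ha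
      _ ≤ 2 * s + a⁻¹ := by linarith
  · calc exp (-(a * (⌊s⌋₊ + 1 - s))) / (1 - exp (-a)) ≤ 1 / (1 - exp (-a)) := by
          gcongr
          refine exp_le_one_iff.2 (neg_nonpos.2 (mul_nonneg ha.le ?_))
          linarith [Nat.lt_floor_add_one s]
      _ ≤ 1 + a⁻¹ := by rw [one_div]; exact inv_one_sub_exp_neg_le ha
      _ ≤ 2 * s + a⁻¹ := by linarith

theorem rpow_mul_exp_neg_mul_eq_exp {x : ℝ} (hx : 0 < x) (κ Y : ℝ) :
    x ^ κ * exp (-Y * x) = exp (κ * log x - Y * x) := by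
  rw [rpow_def_of_pos hx, ← exp_add]
  ring_nf

section Profile

variable {κ Y : ℝ}

theorem div_exp_one_mul_rpow_eq (hκ : 0 < κ) (hY : 0 < Y) :
    (κ / (exp 1 * Y)) ^ κ = exp (κ * (log (κ / Y) - 1)) := by
  rw [rpow_def_of_pos (by positivity), div_mul_eq_div_div_swap, log_div (by positivity)
    (exp_pos 1).ne', log_exp, mul_comm]

theorem mul_log_sub_mul_le_of_le_two_mul (hκ : 0 < κ) (hY : 0 < Y) {x : ℝ} (hx : 0 < x)
    (hx2 : x ≤ 2 * (κ / Y)) :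
    κ * log x - Y * x ≤ κ * (log (κ / Y) - 1) - κ * (x / (κ / Y) - 1) ^ 2 / 4 := by
  have hm : 0 < κ / Y := div_pos hκ hY
  set t := x / (κ / Y)
  have hx : x = t * (κ / Y) := (div_mul_cancel₀ x hm.ne').symm
  have hlog := log_le_sub_one_sub_sq_div_four (t := t) (by positivity)
    ((div_le_iff₀ hm).2 hx2)
  have hYx : Y * x = κ * t := by rw [hx]; field_simp
  rw [hYx, hx, log_mul (by positivity) hm.ne']
  nlinarith [mul_le_mul_of_nonneg_left hlog hκ.le]

theorem mul_log_sub_mul_le_of_le_one_sub_mul (hκ : 0 < κ) (hY : 0 < Y) {Δ x : ℝ} (hΔ : 0 ≤ Δ)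
    (hx : 0 < x) (hxΔ : x ≤ (1 - Δ) * (κ / Y)) :
    κ * log x - Y * x ≤ κ * (log (κ / Y) - 1) - Δ ^ 2 * κ / 4 := by
  have hm : 0 < κ / Y := div_pos hκ hY
  have ht : x / (κ / Y) ≤ 1 - Δ := (div_le_iff₀ hm).2 hxΔ
  have hsq : Δ ^ 2 ≤ (x / (κ / Y) - 1) ^ 2 := by nlinarith
  have := mul_log_sub_mul_le_of_le_two_mul hκ hY hx (by nlinarith)
  nlinarith

theorem mul_log_sub_mul_le_of_one_add_mul_le (hκ : 0 < κ) (hY : 0 < Y) {Δ x : ℝ} (hΔ : 0 ≤ Δ)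
    (hΔ1 : Δ ≤ 1) (hxΔ : (1 + Δ) * (κ / Y) ≤ x) :
    κ * log x - Y * x ≤ κ * (log (κ / Y) - 1) - Δ ^ 2 * κ / 4
      - Δ * Y / (1 + Δ) * (x - (1 + Δ) * (κ / Y)) := by
  have hm : 0 < κ / Y := div_pos hκ hY
  set s := (1 + Δ) * (κ / Y) with hs_def
  have hs : 0 < s := by positivity
  have hpeak := mul_log_sub_mul_le_of_le_two_mul hκ hY hs (by nlinarith)
  have hss : s / (κ / Y) = 1 + Δ := by rw [hs_def]; field_simp
  have hslope : κ * ((x - s) / s) = Y / (1 + Δ) * (x - s) := by rw [hs_def]; field_simp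
  have htangent := mul_le_mul_of_nonneg_left (log_le_log_add_sub_div (hs.trans_le hxΔ) hs) hκ.le
  rw [hss, add_sub_cancel_left] at hpeak
  have : Y * s = (1 + Δ) * κ := by rw [hs_def]; field_simp
  have : Δ * Y / (1 + Δ) = Y - Y / (1 + Δ) := by field_simp; ring
  nlinarith

end Profile

theorem Nat.cast_card_Ioo_zero_ceil_le {x : ℝ} (hx : 0 ≤ x) :
    ((Finset.Ioo 0 ⌈x⌉₊).card : ℝ) ≤ x := by
  rw [Nat.card_Ioo, Nat.sub_zero]
  rcases Nat.eq_zero_or_pos ⌈x⌉₊ with h | h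
  · simpa [h] using hx
  · rw [Nat.cast_sub h, Nat.cast_one]
    linarith [Nat.ceil_lt_add_one hx]

theorem Finset.hasSum_indicator_one {β : Type*} (s : Finset β) :
    HasSum ((s : Set β).indicator (1 : β → ℝ)) s.card := by
  have := hasSum_sum_of_ne_finset_zero (L := .unconditional β) (s := s)
    (fun m hm => Set.indicator_of_notMem (Finset.mem_coe.not.2 hm) (1 : β → ℝ))
  rw [Finset.sum_indicator_subset _ subset_rfl] at this
  simpa only [Pi.one_apply, Finset.sum_const, nsmul_eq_mul, mul_one] using this

theorem indicator_rpow_mul_exp_neg_mul_le {κ Y Δ : ℝ} (hκ : 0 < κ) (hY : 0 < Y) (hΔ : 0 ≤ Δ)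
    (hΔ1 : Δ ≤ 1) (m : ℕ) :
    {m : ℕ | |(m : ℝ) - κ / Y| > Δ * κ / Y}.indicator
        (fun m : ℕ => (m : ℝ) ^ κ * exp (-Y * m)) m ≤
      (κ / (exp 1 * Y)) ^ κ * exp (-Δ ^ 2 * κ / 4) *
        ((Finset.Ioo 0 ⌈(1 - Δ) * (κ / Y)⌉₊ : Set ℕ).indicator 1 m +
          {m : ℕ | (1 + Δ) * (κ / Y) < m}.indicator
            (fun m => exp (-(Δ * Y / (1 + Δ) * (m - (1 + Δ) * (κ / Y))))) m) := by
  set L : Set ℕ := ↑(Finset.Ioo 0 ⌈(1 - Δ) * (κ / Y)⌉₊)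
  set R : Set ℕ := {m : ℕ | (1 + Δ) * (κ / Y) < m}
  have hpeak : (κ / (exp 1 * Y)) ^ κ * exp (-Δ ^ 2 * κ / 4) =
      exp (κ * (log (κ / Y) - 1) - Δ ^ 2 * κ / 4) := by
    rw [div_exp_one_mul_rpow_eq hκ hY, ← exp_add]; ring_nf
  rw [hpeak, mul_add]
  have hL0 : 0 ≤ L.indicator (1 : ℕ → ℝ) m := Set.indicator_nonneg (fun _ _ => zero_le_one) m
  have hR0 : 0 ≤ R.indicator
      (fun m : ℕ => exp (-(Δ * Y / (1 + Δ) * (m - (1 + Δ) * (κ / Y))))) m :=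
    Set.indicator_nonneg (fun _ _ => (exp_pos _).le) m
  refine Set.indicator_apply_le' (fun hm => ?_) fun _ => by positivity
  replace hm : Δ * (κ / Y) < |(m : ℝ) - κ / Y| := by rw [← mul_div_assoc]; exact hm
  rw [lt_abs] at hm
  rcases Nat.eq_zero_or_pos m with rfl | hm0
  · rw [Nat.cast_zero, zero_rpow hκ.ne', zero_mul]
    positivity
  have hmpos : (0 : ℝ) < m := Nat.cast_pos.2 hm0
  rw [rpow_mul_exp_neg_mul_eq_exp hmpos]
  rcases hm with hright | hleft
  · have hmR : m ∈ R := show (1 + Δ) * (κ / Y) < m by linarith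
    rw [Set.indicator_of_mem hmR, ← exp_add]
    refine le_add_of_nonneg_of_le (by positivity) (exp_le_exp.2 ?_)
    linarith [mul_log_sub_mul_le_of_one_add_mul_le hκ hY hΔ hΔ1 (x := m) (by linarith)]
  · have hmL : m ∈ L := Finset.mem_Ioo.2 ⟨hm0, Nat.lt_ceil.2 (by linarith)⟩
    rw [Set.indicator_of_mem hmL, Pi.one_apply, mul_one]
    refine le_add_of_le_of_nonneg (exp_le_exp.2 ?_) (by positivity)
    exact mul_log_sub_mul_le_of_le_one_sub_mul hκ hY hΔ hmpos (by linarith)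

theorem incomplete_sum_tail_bound :
    ∃ C : ℝ, 0 < C ∧ ∀ (κ Y Δ : ℝ), 1 / 2 ≤ κ → 0 < Y → 0 < Δ → Δ < 1 →
      (∑' m : {m : ℕ // |(m : ℝ) - κ / Y| > Δ * κ / Y},
          ((m : ℕ) : ℝ) ^ κ * Real.exp (-Y * ((m : ℕ) : ℝ))) ≤
        C * (1 / Δ + κ) * (1 / Y) * (κ / (Real.exp 1 * Y)) ^ κ * Real.exp (-Δ ^ 2 * κ / 4) := by
  refine ⟨5, by norm_num, fun κ Y Δ hκ hY hΔ hΔ1 => ?_⟩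
  have hκ : 0 < κ := by linarith
  have hs : 0 ≤ (1 + Δ) * (κ / Y) := by positivity
  have ha : 0 < Δ * Y / (1 + Δ) := by positivity
  set P := (κ / (exp 1 * Y)) ^ κ * exp (-Δ ^ 2 * κ / 4)
  have hsum := ((Finset.hasSum_indicator_one (Finset.Ioo 0 ⌈(1 - Δ) * (κ / Y)⌉₊)).add
    (hasSum_indicator_exp_neg_mul_sub ha hs)).mul_left P
  have hdom := indicator_rpow_mul_exp_neg_mul_le hκ hY hΔ.le hΔ1.le
  have hterms : Summable ({m : ℕ | |(m : ℝ) - κ / Y| > Δ * κ / Y}.indicator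
      fun m : ℕ => (m : ℝ) ^ κ * exp (-Y * m)) := by
    refine hsum.summable.of_nonneg_of_le (fun m => Set.indicator_nonneg (fun m _ => ?_) m) hdom
    positivity
  calc _ = _ := tsum_subtype {m : ℕ | |(m : ℝ) - κ / Y| > Δ * κ / Y} _
    _ ≤ _ := hasSum_le hdom hterms.hasSum hsum
    _ ≤ P * (κ / Y + (2 * ((1 + Δ) * (κ / Y)) + (Δ * Y / (1 + Δ))⁻¹)) := by
      gcongr
      · have hm := div_pos hκ hY
        exact (Nat.cast_card_Ioo_zero_ceil_le (by nlinarith)).trans (by nlinarith)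
      · exact exp_neg_mul_floor_add_one_sub_div_le ha hs
    _ = P * ((κ * (3 + 2 * Δ) + (1 / Δ + 1)) * (1 / Y)) := by
      congr 1; field_simp; ring
    _ ≤ P * (5 * (1 / Δ + κ) * (1 / Y)) := by
      have : 1 ≤ 1 / Δ := one_le_one_div hΔ hΔ1.le
      gcongr
      nlinarith
    _ = _ := by ring
end
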